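/- arXiv:1712.09794 — 2 statements merged into one kernel-verified Lean document; each statement's English description precedes it below -/
import Mathlib

section
/- The polynomial I_2(x,y) = 2xy − 3x − 3y + 5 is a two-sided identity for the DP product on 𝒫_2^2: for every P ∈ 𝒫_2^2, P ⊗ I_2 = P = I_2 ⊗ P. -/
open MvPolynomial Finset

/-- The span of monomials x^k1 y^k2 with k1 < m, k2 < n. -/
noncomputable def Pspace (m n : ℕ) : Submodule ℝ (MvPolynomial (Fin 2) ℝ) :=
  Submodule.span ℝ {p | ∃ k1 k2 : ℕ, k1 < m ∧ k2 < n ∧ p = X 0 ^ k1 * X 1 ^ k2}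

/-- The DP product with inner index n. -/
noncomputable def dp (n : ℕ) (P Q : MvPolynomial (Fin 2) ℝ) : MvPolynomial (Fin 2) ℝ :=
  ∑ k ∈ Finset.Icc 1 n,
    (aeval ![X 0, C ((k : ℕ) : ℝ)] P) * (aeval ![C ((k : ℕ) : ℝ), X 1] Q)

/-- P interpolates the matrix A on the grid {1,…,m}×{1,…,n}. -/
def interp {m n : ℕ} (A : Matrix (Fin m) (Fin n) ℝ) (P : MvPolynomial (Fin 2) ℝ) : Prop :=
  ∀ (i : Fin m) (j : Fin n),
    eval ![((i : ℕ) : ℝ) + 1, ((j : ℕ) : ℝ) + 1] P = A i j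

lemma dp_add_left (n : ℕ) (P Q R : MvPolynomial (Fin 2) ℝ) :
    dp n (P + Q) R = dp n P R + dp n Q R := by
  simp [dp, add_mul, Finset.sum_add_distrib]

lemma dp_add_right (n : ℕ) (P Q R : MvPolynomial (Fin 2) ℝ) :
    dp n R (P + Q) = dp n R P + dp n R Q := by
  simp [dp, mul_add, Finset.sum_add_distrib]

lemma dp_smul_left (n : ℕ) (a : ℝ) (P R : MvPolynomial (Fin 2) ℝ) :
    dp n (a • P) R = a • dp n P R := by
  simp [dp, Finset.smul_sum, smul_mul_assoc]

lemma dp_smul_right (n : ℕ) (a : ℝ) (P R : MvPolynomial (Fin 2) ℝ) :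
    dp n R (a • P) = a • dp n R P := by
  simp [dp, Finset.smul_sum, mul_smul_comm]

theorem dp_identity_two (P : MvPolynomial (Fin 2) ℝ) (hP : P ∈ Pspace 2 2) :
    dp 2 P (C 2 * X 0 * X 1 - C 3 * X 0 - C 3 * X 1 + C 5) = P ∧
    dp 2 (C 2 * X 0 * X 1 - C 3 * X 0 - C 3 * X 1 + C 5) P = P := by
  induction hP using Submodule.span_induction with
  | mem p hp =>
    obtain ⟨k1, k2, h1, h2, rfl⟩ := hp
    interval_cases k1 <;> interval_cases k2 <;>
      constructor <;>
      · simp only [dp, show Finset.Icc 1 2 = ({1, 2} : Finset ℕ) from rfl,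
          Finset.sum_pair (by norm_num : (1:ℕ) ≠ 2),
          map_mul, map_add, map_sub, map_pow, aeval_X, aeval_C, map_ofNat,
          Matrix.cons_val_zero, Matrix.cons_val_one, Matrix.head_cons, Nat.cast_one,
          Nat.cast_ofNat, pow_zero, pow_one, one_mul, mul_one, map_one]
        ring
  | zero => simp [dp]
  | add p q hp hq ihp ihq =>
    exact ⟨by rw [dp_add_left, ihp.1, ihq.1], by rw [dp_add_right, ihp.2, ihq.2]⟩
  | smul a p hp ihp =>
    exact ⟨by rw [dp_smul_left, ihp.1], by rw [dp_smul_right, ihp.2]⟩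
end

section
/- The polynomial I_3(x,y) = (1/2)(3x²y² − 12x²y − 12xy² + 10x² + 49xy + 10y² − 42x − 42y + 38) is a two-sided identity for the DP product on 𝒫_3^3: for every P ∈ 𝒫_3^3, P ⊗ I_3 = P = I_3 ⊗ P. -/
open MvPolynomial Finset

noncomputable def I3 : MvPolynomial (Fin 2) ℝ :=
  C (1/2) * (C 3 * X 0 ^ 2 * X 1 ^ 2 - C 12 * X 0 ^ 2 * X 1 - C 12 * X 0 * X 1 ^ 2
    + C 10 * X 0 ^ 2 + C 49 * X 0 * X 1 + C 10 * X 1 ^ 2 - C 42 * X 0 - C 42 * X 1 + C 38)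

set_option maxHeartbeats 2000000 in
lemma dp_base (k1 k2 : ℕ) (h1 : k1 < 3) (h2 : k2 < 3) :
    dp 3 (X 0 ^ k1 * X 1 ^ k2) I3 = X 0 ^ k1 * X 1 ^ k2 ∧
    dp 3 I3 (X 0 ^ k1 * X 1 ^ k2) = X 0 ^ k1 * X 1 ^ k2 := by
  interval_cases k1 <;> interval_cases k2 <;>
  · constructor <;>
    · apply MvPolynomial.funext
      intro x
      rw [dp, show Finset.Icc 1 3 = {1,2,3} from rfl, Finset.sum_insert (by decide),
        Finset.sum_insert (by decide), Finset.sum_singleton]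
      simp only [I3, map_mul, map_add, map_sub, map_pow, aeval_X, aeval_C, eval_mul, eval_add,
        eval_sub, eval_pow, eval_X, eval_C, Matrix.cons_val_zero, Matrix.cons_val_one,
        Matrix.head_cons, algebraMap_eq, map_one, pow_zero, one_mul, mul_one]
      norm_num
      ring

theorem dp_identity_three (P : MvPolynomial (Fin 2) ℝ) (hP : P ∈ Pspace 3 3) :
    dp 3 P I3 = P ∧ dp 3 I3 P = P := by
  refine Submodule.span_induction ?_ ?_ ?_ ?_ hP
  · rintro p ⟨k1, k2, h1, h2, rfl⟩
    exact dp_base k1 k2 h1 h2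
  · constructor <;> simp [dp]
  · rintro p q - - ⟨h1, h2⟩ ⟨h3, h4⟩
    rw [dp_add_left, dp_add_right, h1, h2, h3, h4]
    exact ⟨rfl, rfl⟩
  · rintro a p - ⟨h1, h2⟩
    rw [dp_smul_left, dp_smul_right, h1, h2]
    exact ⟨rfl, rfl⟩
end
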